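/- arXiv:2311.18144 — 4 statements merged into one kernel-verified Lean document; each statement's English description precedes it below -/
import Mathlib

section
/- If ε and K satisfy ∂ₜε = -ηεK, ∂ₜK = -2ηλεK with conserved quantity C = K - 2λε = 0, then K(t) = 2λε(t) = 2/(2ηt + B₂⁻¹) for some constant B₂ > 0; in particular both K and ε decay polynomially like 1/(ηt) as t → ∞. -/
/-!
The conserved quantity `K - 2λε` has zero derivative, so it stays `0` and `K = 2λε`. Then `K`
solves the Riccati equation `K' = -η K²`, whose solution through `K 0` is
`K t = 1 / (η t + 1 / K 0)`; this is `2 / (2 η t + B₂⁻¹)` with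
`B₂ = K 0 / 2`, and `η t K t = η t / (η t + 1 / K 0) → 1`.
-/

open Set Filter Topology

theorem apply_eq_of_hasDerivAt_zero_on_Ici {E : Type*} [NormedAddCommGroup E] [NormedSpace ℝ E]
    {f : ℝ → E} {a : ℝ} (hf : ∀ t ∈ Ici a, HasDerivAt f 0 t) : ∀ t ∈ Ici a, f t = f a :=
  fun t ht ↦ constant_of_has_deriv_right_zero
    (fun s hs ↦ (hf s hs.1).continuousAt.continuousWithinAt)
    (fun s hs ↦ (hf s hs.1).hasDerivWithinAt) t ⟨ht, le_rfl⟩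

/-- The difference of two solutions solves the linear equation `d' = -η (y + z) d`, whose
coefficient is bounded on compact intervals, so Grönwall's inequality applies. -/
theorem eqOn_Ici_of_hasDerivAt_neg_mul_sq {η a : ℝ} {y z : ℝ → ℝ}
    (hy : ∀ t ∈ Ici a, HasDerivAt y (-(η * y t ^ 2)) t)
    (hz : ∀ t ∈ Ici a, HasDerivAt z (-(η * z t ^ 2)) t) (ha : y a = z a) :
    EqOn y z (Ici a) := by
  intro T hT
  have hcont : ContinuousOn (y + z) (Icc a T) := fun t ht ↦
    ((hy t ht.1).continuousAt.add (hz t ht.1).continuousAt).continuousWithinAt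
  obtain ⟨M, hM⟩ := isCompact_Icc.exists_bound_of_continuousOn hcont
  have hdiff : ∀ t ∈ Icc a T, (y - z) t = 0 :=
    eq_zero_of_abs_deriv_le_mul_abs_self_of_eq_zero_right (K := ‖η‖ * M)
      (f' := fun t ↦ -(η * (y t + z t)) * (y t - z t))
      (fun t ht ↦ ((hy t ht.1).continuousAt.sub (hz t ht.1).continuousAt).continuousWithinAt)
      (fun t ht ↦ (((hy t ht.1).sub (hz t ht.1)).congr_deriv (by ring)).hasDerivWithinAt)
      (sub_eq_zero.2 ha)
      (fun t ht ↦ by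
        rw [norm_mul, norm_neg, norm_mul, Pi.sub_apply]
        gcongr
        exact hM t (Ico_subset_Icc_self ht))
  exact sub_eq_zero.1 (hdiff T ⟨hT, le_rfl⟩)

theorem hasDerivAt_inv_mul_add {η c t : ℝ} (h : η * t + c ≠ 0) :
    HasDerivAt (fun s ↦ (η * s + c)⁻¹) (-(η * ((η * t + c)⁻¹) ^ 2)) t := by
  refine ((((hasDerivAt_id' t).const_mul η).add_const c).fun_inv h).congr_deriv ?_
  field_simp

theorem tendsto_div_add_const_atTop (c : ℝ) :
    Tendsto (fun x : ℝ ↦ x / (x + c)) atTop (𝓝 1) := by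
  have h : Tendsto (fun x : ℝ ↦ 1 - c / (x + c)) atTop (𝓝 (1 - 0)) :=
    tendsto_const_nhds.sub
      (tendsto_const_nhds.div_atTop (tendsto_atTop_add_const_right _ c tendsto_id))
  rw [sub_zero] at h
  refine h.congr' ?_
  filter_upwards [eventually_gt_atTop (-c)] with x hx
  have : x + c ≠ 0 := by linarith
  field_simp
  ring

/-- Critical-point solution of the generalized Lotka-Volterra equations
`∂ₜε = -ηεK`, `∂ₜK = -2ηλεK` when the conserved quantity `C = K - 2λε`
vanishes: `K(t) = 2λε(t) = 2/(2ηt + B₂⁻¹)` for some `B₂ > 0`; in particular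
both `K` and `ε` decay polynomially like `1/(ηt)` as `t → ∞`. -/
theorem lv_solution_critical (η lam : ℝ) (hη : 0 < η) (hlam : 0 < lam)
    (ε K : ℝ → ℝ)
    (hε : ∀ t, 0 ≤ t → HasDerivAt ε (-(η * ε t * K t)) t)
    (hK : ∀ t, 0 ≤ t → HasDerivAt K (-(2 * η * lam * ε t * K t)) t)
    (hC : K 0 - 2 * lam * ε 0 = 0) (hK0 : 0 < K 0) :
    ∃ B₂ : ℝ, 0 < B₂ ∧
      (∀ t, 0 ≤ t → K t = 2 * lam * ε t ∧ K t = 2 / (2 * η * t + B₂⁻¹)) ∧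
      Filter.Tendsto (fun t => η * t * K t) Filter.atTop (nhds 1) ∧
      Filter.Tendsto (fun t => η * t * ε t) Filter.atTop (nhds (1 / (2 * lam))) := by
  have hcons : ∀ t ∈ Ici (0 : ℝ), K t = 2 * lam * ε t := fun t ht ↦ by
    have h := apply_eq_of_hasDerivAt_zero_on_Ici (f := fun s ↦ K s - 2 * lam * ε s)
      (fun s hs ↦ ((hK s hs).sub ((hε s hs).const_mul (2 * lam))).congr_deriv (by ring)) t ht
    linarith
  have hriccati : ∀ t ∈ Ici (0 : ℝ), HasDerivAt K (-(η * K t ^ 2)) t := fun t ht ↦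
    (hK t ht).congr_deriv (by rw [hcons t ht]; ring)
  set c := (K 0)⁻¹
  have hc : 0 < c := inv_pos.2 hK0
  have hsol : ∀ t ∈ Ici (0 : ℝ), K t = (η * t + c)⁻¹ :=
    eqOn_Ici_of_hasDerivAt_neg_mul_sq hriccati
      (fun t ht ↦ hasDerivAt_inv_mul_add (by positivity [mem_Ici.1 ht]))
      (by simp [c])
  have hlimK : Tendsto (fun t ↦ η * t * K t) atTop (𝓝 1) := by
    refine ((tendsto_div_add_const_atTop c).comp (tendsto_id.const_mul_atTop hη)).congr' ?_
    filter_upwards [eventually_ge_atTop 0] with t ht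
    simp [hsol t ht, div_eq_mul_inv]
  refine ⟨K 0 / 2, by positivity, fun t ht ↦ ⟨hcons t ht, ?_⟩, hlimK, ?_⟩
  · rw [hsol t ht]
    field_simp
    linear_combination -mul_inv_cancel₀ hK0.ne'
  · refine (hlimK.div_const (2 * lam)).congr' ?_
    filter_upwards [eventually_ge_atTop 0] with t ht
    rw [hcons t ht]
    field_simp
end

section
/- For the k-th frame potential of the restricted Haar ensemble of unitaries U = diag(1, V) with V Haar-random on dimension d-1, one has F^(k)_RH = Σ_{k₁,k₂ ≥ 0, k₁+2k₂ ≤ k} k!/(k₁!(k₂!)²(k-k₁-2k₂)!) · F^(k₁+k₂)_Haar, where F^(m)_Haar = m!. -/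
open MeasureTheory

lemma vand (a k : ℕ) (h : a ≤ k) :
    ∑ j ∈ Finset.range (k+1), a.choose j * (k-a).choose j = k.choose a := by
  have hv := Nat.add_choose_eq a (k-a) (k-a)
  rw [Nat.add_sub_cancel' h, Nat.choose_symm h,
    Finset.Nat.sum_antidiagonal_eq_sum_range_succ_mk] at hv
  have h1 : ∑ i ∈ Finset.range ((k-a).succ), a.choose i * (k-a).choose (k-a-i)
      = ∑ i ∈ Finset.range ((k-a)+1), a.choose i * (k-a).choose i := by
    refine Finset.sum_congr rfl fun i hi => ?_
    rw [Finset.mem_range] at hi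
    rw [Nat.choose_symm (show i ≤ k - a by omega)]
  rw [hv, h1]
  refine (Finset.sum_subset (Finset.range_subset_range.2 (by omega)) fun i _ hi => ?_).symm
  rw [Finset.mem_range, not_lt] at hi
  rw [Nat.choose_eq_zero_of_lt (show k - a < i by omega), mul_zero]

lemma nat_sum (k : ℕ) :
    ∑ p ∈ (Finset.range (k+1) ×ˢ Finset.range (k+1)).filter (fun p => p.1 + 2*p.2 ≤ k),
      k.choose (p.1+p.2) * ((p.1+p.2).choose p.2) * ((k-(p.1+p.2)).choose p.2) * (p.1+p.2).factorial
    = ∑ a ∈ Finset.range (k+1), k.choose a ^ 2 * a.factorial := by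
  rw [Finset.sum_nbij' (fun p => (p.1+p.2, p.2)) (fun q => (q.1-q.2, q.2))
    (t := (Finset.range (k+1) ×ˢ Finset.range (k+1)).filter (fun q => q.2 ≤ q.1 ∧ q.1 + q.2 ≤ k))
    (g := fun q => k.choose q.1 * (q.1.choose q.2) * ((k-q.1).choose q.2) * q.1.factorial)
    (by rintro ⟨x,y⟩ hp; simp only [Finset.mem_filter, Finset.mem_product, Finset.mem_range] at hp ⊢; omega)
    (by rintro ⟨x,y⟩ hq; simp only [Finset.mem_filter, Finset.mem_product, Finset.mem_range] at hq ⊢; omega)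
    (by rintro ⟨x,y⟩ hp; simp only [Finset.mem_filter, Finset.mem_product, Finset.mem_range] at hp
        dsimp only; simp only [Prod.mk.injEq, and_true, true_and]; omega)
    (by rintro ⟨x,y⟩ hq; simp only [Finset.mem_filter, Finset.mem_product, Finset.mem_range] at hq
        dsimp only; simp only [Prod.mk.injEq, and_true, true_and]; omega)
    (by intro p hp; rfl)]
  rw [Finset.sum_filter, Finset.sum_product]
  refine Finset.sum_congr rfl fun a ha => ?_
  rw [Finset.mem_range] at ha
  have hstep : ∀ j ∈ Finset.range (k+1),
      (if j ≤ a ∧ a + j ≤ k then k.choose a * a.choose j * ((k-a).choose j) * a.factorial else 0)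
      = k.choose a * a.factorial * (a.choose j * (k-a).choose j) := by
    intro j hj
    by_cases hc : j ≤ a ∧ a + j ≤ k
    · rw [if_pos hc]; ring
    · rw [if_neg hc]
      rcases Nat.lt_or_ge a j with h1 | h1
      · rw [Nat.choose_eq_zero_of_lt h1]; ring
      · rw [Nat.choose_eq_zero_of_lt (show k - a < j by omega)]; ring
  rw [Finset.sum_congr rfl hstep, ← Finset.mul_sum, vand a k (by omega)]
  ring

lemma term_eq (k k₁ k₂ : ℕ) (h : k₁ + 2*k₂ ≤ k) :
    (k.factorial : ℂ) / ((k₁.factorial : ℂ) * (k₂.factorial : ℂ)^2 * ((k - k₁ - 2*k₂).factorial : ℂ))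
        * ((k₁+k₂).factorial : ℂ)
    = ((k.choose (k₁+k₂) * ((k₁+k₂).choose k₂) * ((k-(k₁+k₂)).choose k₂) * (k₁+k₂).factorial : ℕ) : ℂ) := by
  have h1 : k₁ + k₂ ≤ k := by omega
  have e1 : k.choose (k₁+k₂) * (k₁+k₂).factorial * (k - (k₁+k₂)).factorial = k.factorial :=
    Nat.choose_mul_factorial_mul_factorial h1
  have e2 : (k₁+k₂).choose k₂ * k₂.factorial * k₁.factorial = (k₁+k₂).factorial := by
    have := Nat.choose_mul_factorial_mul_factorial (Nat.le_add_left k₂ k₁)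
    simpa using this
  have e3 : (k-(k₁+k₂)).choose k₂ * k₂.factorial * (k - k₁ - 2*k₂).factorial
      = (k-(k₁+k₂)).factorial := by
    have h2 : k₂ ≤ k - (k₁+k₂) := by omega
    have := Nat.choose_mul_factorial_mul_factorial h2
    have h3 : k - (k₁+k₂) - k₂ = k - k₁ - 2*k₂ := by omega
    rwa [h3] at this
  have key : k.choose (k₁+k₂) * ((k₁+k₂).choose k₂) * ((k-(k₁+k₂)).choose k₂) * (k₁+k₂).factorial
      * (k₁.factorial * k₂.factorial^2 * (k - k₁ - 2*k₂).factorial)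
      = k.factorial * (k₁+k₂).factorial := by
    rw [← e1, ← e2, ← e3]; ring
  have hne : (k₁.factorial : ℂ) * (k₂.factorial : ℂ)^2 * ((k - k₁ - 2*k₂).factorial : ℂ) ≠ 0 := by
    exact mul_ne_zero (mul_ne_zero (Nat.cast_ne_zero.2 k₁.factorial_ne_zero)
      (pow_ne_zero _ (Nat.cast_ne_zero.2 k₂.factorial_ne_zero)))
      (Nat.cast_ne_zero.2 (k - k₁ - 2*k₂).factorial_ne_zero)
  rw [div_mul_eq_mul_div, div_eq_iff hne]
  have hc := congrArg (Nat.cast (R := ℂ)) key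
  push_cast at hc ⊢
  linear_combination -hc



/-- Frame potential of the restricted Haar ensemble `U = diag(1, V)` with `V`
Haar-random: writing `tr(U†U') = 1 + z` with `z = tr(V†V')` whose Haar moments
are `E[zᵃ z̄ᵇ] = δ_{ab} a!`, the `k`-th frame potential is
`F^(k)_RH = Σ_{k₁+2k₂ ≤ k} k!/(k₁!(k₂!)²(k-k₁-2k₂)!) · (k₁+k₂)!`
where `F^(m)_Haar = m!`. -/
theorem frame_potential_restricted_haar {Ω : Type*} [MeasurableSpace Ω]
    (μ : Measure Ω) [IsProbabilityMeasure μ] (z : Ω → ℂ)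
    (hint : ∀ a b : ℕ, Integrable (fun ω => z ω ^ a * (starRingEnd ℂ) (z ω) ^ b) μ)
    (hmom : ∀ a b : ℕ, ∫ ω, z ω ^ a * (starRingEnd ℂ) (z ω) ^ b ∂μ =
      if a = b then (a.factorial : ℂ) else 0)
    (k : ℕ) :
    ∫ ω, (1 + z ω + (starRingEnd ℂ) (z ω) + z ω * (starRingEnd ℂ) (z ω)) ^ k ∂μ =
      ∑ p ∈ (Finset.range (k + 1) ×ˢ Finset.range (k + 1)).filter
          (fun p => p.1 + 2 * p.2 ≤ k),
        (k.factorial : ℂ) /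
            ((p.1.factorial : ℂ) * (p.2.factorial : ℂ) ^ 2 *
              ((k - p.1 - 2 * p.2).factorial : ℂ)) *
          ((p.1 + p.2).factorial : ℂ) := by
  have hpt : ∀ ω, (1 + z ω + (starRingEnd ℂ) (z ω) + z ω * (starRingEnd ℂ) (z ω)) ^ k
      = ∑ p ∈ Finset.range (k+1) ×ˢ Finset.range (k+1),
          ((k.choose p.1 : ℂ) * (k.choose p.2 : ℂ)) * (z ω ^ p.1 * (starRingEnd ℂ) (z ω) ^ p.2) := by
    intro ω
    have h1 : 1 + z ω + (starRingEnd ℂ) (z ω) + z ω * (starRingEnd ℂ) (z ω)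
        = (z ω + 1) * ((starRingEnd ℂ) (z ω) + 1) := by ring
    rw [h1, mul_pow, add_pow, add_pow, Finset.sum_mul_sum, Finset.sum_product]
    refine Finset.sum_congr rfl fun i _ => Finset.sum_congr rfl fun j _ => ?_
    push_cast
    ring
  calc ∫ ω, (1 + z ω + (starRingEnd ℂ) (z ω) + z ω * (starRingEnd ℂ) (z ω)) ^ k ∂μ
      = ∫ ω, ∑ p ∈ Finset.range (k+1) ×ˢ Finset.range (k+1),
          ((k.choose p.1 : ℂ) * (k.choose p.2 : ℂ))
            * (z ω ^ p.1 * (starRingEnd ℂ) (z ω) ^ p.2) ∂μ := by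
        exact integral_congr_ae (Filter.Eventually.of_forall fun ω => hpt ω)
    _ = ∑ p ∈ Finset.range (k+1) ×ˢ Finset.range (k+1),
          ∫ ω, ((k.choose p.1 : ℂ) * (k.choose p.2 : ℂ))
            * (z ω ^ p.1 * (starRingEnd ℂ) (z ω) ^ p.2) ∂μ := by
        exact integral_finset_sum _ fun p _ => (hint p.1 p.2).const_mul _
    _ = ∑ p ∈ Finset.range (k+1) ×ˢ Finset.range (k+1),
          ((k.choose p.1 : ℂ) * (k.choose p.2 : ℂ))
            * (if p.1 = p.2 then (p.1.factorial : ℂ) else 0) := by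
        refine Finset.sum_congr rfl fun p _ => ?_
        rw [MeasureTheory.integral_const_mul, hmom]
    _ = ∑ a ∈ Finset.range (k+1), ((k.choose a ^ 2 * a.factorial : ℕ) : ℂ) := by
        rw [Finset.sum_product]
        refine Finset.sum_congr rfl fun a ha => ?_
        simp only [mul_ite, mul_zero, Finset.sum_ite_eq, ha, if_pos]
        push_cast
        ring
    _ = ((∑ a ∈ Finset.range (k+1), k.choose a ^ 2 * a.factorial : ℕ) : ℂ) := by push_cast; ring
    _ = ((∑ p ∈ (Finset.range (k+1) ×ˢ Finset.range (k+1)).filter (fun p => p.1 + 2*p.2 ≤ k),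
          k.choose (p.1+p.2) * ((p.1+p.2).choose p.2) * ((k-(p.1+p.2)).choose p.2)
            * (p.1+p.2).factorial : ℕ) : ℂ) := by rw [nat_sum]
    _ = ∑ p ∈ (Finset.range (k + 1) ×ˢ Finset.range (k + 1)).filter
          (fun p => p.1 + 2 * p.2 ≤ k),
        (k.factorial : ℂ) /
            ((p.1.factorial : ℂ) * (p.2.factorial : ℂ) ^ 2 *
              ((k - p.1 - 2 * p.2).factorial : ℂ)) *
          ((p.1 + p.2).factorial : ℂ) := by
        rw [Nat.cast_sum]
        refine Finset.sum_congr rfl fun p hp => ?_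
        rw [Finset.mem_filter] at hp
        exact (term_eq k p.1 p.2 hp.2).symm
end

section
/- The frame potential of the restricted Haar ensemble satisfies F^(k)_RH ≥ (k+1)! = F^(k+1)_Haar. -/
/-- The frame potential of the restricted Haar ensemble,
`F^(k)_RH = Σ_{k₁+2k₂ ≤ k} k!/(k₁!(k₂!)²(k-k₁-2k₂)!) · (k₁+k₂)!`,
satisfies `F^(k)_RH ≥ (k+1)! = F^(k+1)_Haar`. -/
theorem frame_potential_restricted_haar_lower_bound (k : ℕ) :
    ((k + 1).factorial : ℝ) ≤
      ∑ p ∈ (Finset.range (k + 1) ×ˢ Finset.range (k + 1)).filter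
          (fun p => p.1 + 2 * p.2 ≤ k),
        (k.factorial : ℝ) /
            ((p.1.factorial : ℝ) * (p.2.factorial : ℝ) ^ 2 *
              ((k - p.1 - 2 * p.2).factorial : ℝ)) *
          ((p.1 + p.2).factorial : ℝ) := by
  match k with
  | 0 => norm_num [Finset.sum_filter]
  | 1 =>
    norm_num [Finset.sum_filter, Finset.sum_product, Finset.sum_range_succ,
      Nat.factorial]
  | (m + 2) =>
    set k := m + 2 with hk
    set S := (Finset.range (k + 1) ×ˢ Finset.range (k + 1)).filter
        (fun p => p.1 + 2 * p.2 ≤ k) with hS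
    set f : ℕ × ℕ → ℝ := fun p =>
        (k.factorial : ℝ) /
            ((p.1.factorial : ℝ) * (p.2.factorial : ℝ) ^ 2 *
              ((k - p.1 - 2 * p.2).factorial : ℝ)) *
          ((p.1 + p.2).factorial : ℝ) with hf
    have hT : ({(k, 0), (m + 1, 0), (m, 1)} : Finset (ℕ × ℕ)) ⊆ S := by
      intro p hp
      simp only [Finset.mem_insert, Finset.mem_singleton] at hp
      rcases hp with rfl | rfl | rfl <;>
        simp [hS, Finset.mem_filter, Finset.mem_product, hk] <;> omega
    have hsum : ∑ p ∈ ({(k, 0), (m + 1, 0), (m, 1)} : Finset (ℕ × ℕ)), f p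
        = ((k + 1).factorial : ℝ) := by
      have h1 : ((k, 0) : ℕ × ℕ) ≠ (m + 1, 0) := by simp [hk]
      have h2 : ((k, 0) : ℕ × ℕ) ≠ (m, 1) := by simp
      have h3 : ((m + 1, 0) : ℕ × ℕ) ≠ (m, 1) := by simp
      rw [Finset.sum_insert (by simp [h1, h2]), Finset.sum_insert (by simp [h3]),
        Finset.sum_singleton]
      simp only [hf, hk]
      have e1 : m + 2 - (m + 2) - 2 * 0 = 0 := by omega
      have e2 : m + 2 - (m + 1) - 2 * 0 = 1 := by omega
      have e3 : m + 2 - m - 2 * 1 = 0 := by omega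
      rw [e1, e2, e3]
      have p1 : ((m + 1).factorial : ℝ) > 0 := by positivity
      have p2 : ((m + 2).factorial : ℝ) > 0 := by positivity
      have p3 : ((m).factorial : ℝ) > 0 := by positivity
      have f2 : ((m + 2).factorial : ℝ) = (m + 2) * (m + 1).factorial := by
        rw [Nat.factorial_succ]; push_cast; ring
      have f1 : ((m + 1).factorial : ℝ) = (m + 1) * m.factorial := by
        rw [Nat.factorial_succ]; push_cast; ring
      have f3 : ((m + 2 + 1).factorial : ℝ) = (m + 3) * (m + 2).factorial := by
        rw [show m + 2 + 1 = (m + 2) + 1 from rfl, Nat.factorial_succ]; push_cast; ring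
      field_simp
      rw [f3, f2, f1]
      push_cast [Nat.factorial]
      ring
    calc ((k + 1).factorial : ℝ)
        = ∑ p ∈ ({(k, 0), (m + 1, 0), (m, 1)} : Finset (ℕ × ℕ)), f p := hsum.symm
      _ ≤ ∑ p ∈ S, f p := by
          apply Finset.sum_le_sum_of_subset_of_nonneg hT
          intro p _ _
          apply mul_nonneg (div_nonneg (by positivity) (by positivity)) (by positivity)
end

section
/- For the XXZ Hamiltonian O_XXZ = -Σ_{i=1}^{n-1}(σˣᵢσˣᵢ₊₁ + σʸᵢσʸᵢ₊₁ + Jσᶻᵢσᶻᵢ₊₁) - JΣ_{i=1}^n σᶻᵢ on n qubits (open boundary), tr(O³_XXZ) = 6J(1-J²)(n-1)·d with d = 2ⁿ; in particular tr(O³_XXZ) = 0 when J = 1. -/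
/-- Single-qubit Pauli matrices. -/
noncomputable def pauliX : Matrix (Fin 2) (Fin 2) ℂ := !![0, 1; 1, 0]
noncomputable def pauliY : Matrix (Fin 2) (Fin 2) ℂ := !![0, -Complex.I; Complex.I, 0]
noncomputable def pauliZ : Matrix (Fin 2) (Fin 2) ℂ := !![1, 0; 0, -1]

/-- The single-site operator `A` acting on qubit `i` of an `n`-qubit register
(identity elsewhere). -/
noncomputable def siteOp {n : ℕ} (A : Matrix (Fin 2) (Fin 2) ℂ) (i : Fin n) :
    Matrix (Fin n → Fin 2) (Fin n → Fin 2) ℂ :=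
  Matrix.of fun x y => if ∀ j, j ≠ i → x j = y j then A (x i) (y i) else 0

/-- The XXZ Hamiltonian on `n` qubits with open boundary conditions. -/
noncomputable def xxzHamiltonian (n : ℕ) (J : ℝ) :
    Matrix (Fin n → Fin 2) (Fin n → Fin 2) ℂ :=
  -(∑ i : Fin n, if h : (i : ℕ) + 1 < n then
      siteOp pauliX i * siteOp pauliX ⟨(i : ℕ) + 1, h⟩
      + siteOp pauliY i * siteOp pauliY ⟨(i : ℕ) + 1, h⟩
      + (J : ℂ) • (siteOp pauliZ i * siteOp pauliZ ⟨(i : ℕ) + 1, h⟩)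
    else 0)
  - (J : ℂ) • ∑ i : Fin n, siteOp pauliZ i


abbrev M2 := Matrix (Fin 2) (Fin 2) ℂ

noncomputable def str {n : ℕ} (f : Fin n → M2) :
    Matrix (Fin n → Fin 2) (Fin n → Fin 2) ℂ :=
  Matrix.of fun x y => ∏ j, f j (x j) (y j)

lemma str_mul {n : ℕ} (f g : Fin n → M2) :
    str f * str g = str (fun j => f j * g j) := by
  ext x y
  simp only [str, Matrix.mul_apply, Matrix.of_apply]
  rw [show (∑ z : Fin n → Fin 2, (∏ j, f j (x j) (z j)) * ∏ j, g j (z j) (y j))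
      = ∑ z : Fin n → Fin 2, ∏ j, (f j (x j) (z j) * g j (z j) (y j)) by
    refine Finset.sum_congr rfl fun z _ => ?_
    rw [Finset.prod_mul_distrib]]
  rw [Fintype.prod_sum]

lemma trace_str {n : ℕ} (f : Fin n → M2) :
    (str f).trace = ∏ j, (f j).trace := by
  simp only [Matrix.trace, Matrix.diag, str, Matrix.of_apply]
  rw [Fintype.prod_sum]

lemma siteOp_eq {n : ℕ} (A : M2) (i : Fin n) :
    siteOp A i = str (Function.update (fun _ => (1 : M2)) i A) := by
  ext x y
  simp only [siteOp, str, Matrix.of_apply]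
  by_cases h : ∀ j, j ≠ i → x j = y j
  · rw [if_pos h]
    rw [← Finset.mul_prod_erase Finset.univ _ (Finset.mem_univ i)]
    rw [Function.update_self]
    have : ∀ j ∈ Finset.univ.erase i,
        Function.update (fun _ => (1 : M2)) i A j (x j) (y j) = 1 := by
      intro j hj
      have hji : j ≠ i := (Finset.mem_erase.mp hj).1
      rw [Function.update_of_ne hji]
      rw [h j hji, Matrix.one_apply_eq]
    rw [Finset.prod_congr rfl this, Finset.prod_const_one, mul_one]
  · rw [if_neg h]
    push_neg at h
    obtain ⟨j, hji, hxy⟩ := h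
    refine (Finset.prod_eq_zero (Finset.mem_univ j) ?_).symm
    rw [Function.update_of_ne hji]
    exact Matrix.one_apply_ne hxy

noncomputable def Pp : Fin 4 → M2 := ![pauliX, pauliY, pauliZ, pauliZ]
noncomputable def Qp : Fin 4 → M2 := ![pauliX, pauliY, pauliZ, 1]

noncomputable def cf (n : ℕ) (J : ℝ) (i : Fin n) (t : Fin 4) : ℂ :=
  if (i : ℕ) + 1 < n then (if 2 ≤ (t : ℕ) then (J : ℂ) else 1)
  else (if t = 3 then (J : ℂ) else 0)

noncomputable def uf (n : ℕ) (i : Fin n) (t : Fin 4) : Fin n → M2 :=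
  if t = 3 then Function.update (fun _ => (1 : M2)) i pauliZ
  else if h : (i : ℕ) + 1 < n then
    Function.update (Function.update (fun _ => (1 : M2)) i (Pp t)) ⟨(i : ℕ) + 1, h⟩ (Pp t)
  else (fun _ => (1 : M2))

noncomputable def g (n : ℕ) (J : ℝ) (i : Fin n) :
    Matrix (Fin n → Fin 2) (Fin n → Fin 2) ℂ :=
  ∑ t : Fin 4, cf n J i t • str (uf n i t)

lemma update_mul_update {n : ℕ} (a b : Fin n) (hab : a ≠ b) (A B : M2) :
    (fun m => Function.update (fun _ => (1 : M2)) a A m *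
      Function.update (fun _ => (1 : M2)) b B m)
    = Function.update (Function.update (fun _ => (1 : M2)) a A) b B := by
  funext m
  by_cases hm : m = b
  · subst hm
    rw [Function.update_self, Function.update_self, Function.update_of_ne
      (Ne.symm hab), one_mul]
  · simp only [Function.update_of_ne hm, mul_one]

lemma uf_eq_pair {n : ℕ} (i : Fin n) (t : Fin 4) (ht : ¬ t = 3)
    (h : (i : ℕ) + 1 < n) :
    uf n i t = Function.update (Function.update (fun _ => (1 : M2)) i (Pp t))
      ⟨(i : ℕ) + 1, h⟩ (Pp t) := by
  unfold uf
  rw [if_neg ht, dif_pos h]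

lemma uf_eq_site {n : ℕ} (i : Fin n) :
    uf n i 3 = Function.update (fun _ => (1 : M2)) i pauliZ := by
  unfold uf
  rw [if_pos rfl]

lemma cf_three {n : ℕ} (J : ℝ) (i : Fin n) : cf n J i 3 = (J : ℂ) := by
  unfold cf
  split
  · rw [if_pos (by decide)]
  · rw [if_pos rfl]

lemma H_eq (n : ℕ) (J : ℝ) : xxzHamiltonian n J = -∑ i, g n J i := by
  unfold xxzHamiltonian
  rw [sub_eq_add_neg, ← neg_add]
  congr 1
  rw [Finset.smul_sum, ← Finset.sum_add_distrib]
  refine Finset.sum_congr rfl fun i _ => ?_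
  unfold g
  rw [Fin.sum_univ_four, cf_three, uf_eq_site]
  by_cases h : (i : ℕ) + 1 < n
  · have hne : i ≠ (⟨(i : ℕ) + 1, h⟩ : Fin n) := by
      simp only [ne_eq, Fin.ext_iff]; omega
    rw [dif_pos h, uf_eq_pair i 0 (by decide) h, uf_eq_pair i 1 (by decide) h,
      uf_eq_pair i 2 (by decide) h,
      show cf n J i 0 = 1 by unfold cf; rw [if_pos h, if_neg (by decide)],
      show cf n J i 1 = 1 by unfold cf; rw [if_pos h, if_neg (by decide)],
      show cf n J i 2 = (J : ℂ) by unfold cf; rw [if_pos h, if_pos (by decide)],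
      one_smul, one_smul, siteOp_eq pauliX i, siteOp_eq pauliX ⟨(i : ℕ) + 1, h⟩,
      siteOp_eq pauliY i, siteOp_eq pauliY ⟨(i : ℕ) + 1, h⟩, siteOp_eq pauliZ i,
      siteOp_eq pauliZ ⟨(i : ℕ) + 1, h⟩, str_mul, str_mul, str_mul,
      update_mul_update i ⟨(i : ℕ) + 1, h⟩ hne,
      update_mul_update i ⟨(i : ℕ) + 1, h⟩ hne,
      update_mul_update i ⟨(i : ℕ) + 1, h⟩ hne]
    rfl
  · rw [dif_neg h,
      show cf n J i 0 = 0 by unfold cf; rw [if_neg h, if_neg (by decide)],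
      show cf n J i 1 = 0 by unfold cf; rw [if_neg h, if_neg (by decide)],
      show cf n J i 2 = 0 by unfold cf; rw [if_neg h, if_neg (by decide)],
      zero_smul, zero_smul, zero_smul, zero_add, zero_add, zero_add, zero_add,
      siteOp_eq pauliZ i]


lemma traceOne : (1 : M2).trace = 2 := by
  simp [Matrix.trace_one]

lemma traceX : pauliX.trace = 0 := by
  simp [pauliX, Matrix.trace_fin_two]

lemma traceY : pauliY.trace = 0 := by
  simp [pauliY, Matrix.trace_fin_two]

lemma traceZ : pauliZ.trace = 0 := by
  simp [pauliZ, Matrix.trace_fin_two]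

lemma mulXX : pauliX * pauliX = 1 := by
  ext i j
  fin_cases i <;> fin_cases j <;>
    simp [pauliX, Matrix.mul_apply, Fin.sum_univ_two, Matrix.one_apply]

lemma mulYY : pauliY * pauliY = 1 := by
  ext i j
  fin_cases i <;> fin_cases j <;>
    simp [pauliY, Matrix.mul_apply, Fin.sum_univ_two, Matrix.one_apply]

lemma mulZZ : pauliZ * pauliZ = 1 := by
  ext i j
  fin_cases i <;> fin_cases j <;>
    simp [pauliZ, Matrix.mul_apply, Fin.sum_univ_two, Matrix.one_apply]

lemma mulXY : pauliX * pauliY = Complex.I • pauliZ := by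
  ext i j
  fin_cases i <;> fin_cases j <;>
    simp [pauliX, pauliY, pauliZ, Matrix.mul_apply, Fin.sum_univ_two]

lemma mulYX : pauliY * pauliX = (-Complex.I) • pauliZ := by
  ext i j
  fin_cases i <;> fin_cases j <;>
    simp [pauliX, pauliY, pauliZ, Matrix.mul_apply, Fin.sum_univ_two]

lemma mulXZ : pauliX * pauliZ = (-Complex.I) • pauliY := by
  ext i j
  fin_cases i <;> fin_cases j <;>
    simp [pauliX, pauliY, pauliZ, Matrix.mul_apply, Fin.sum_univ_two] <;> ring

lemma mulZX : pauliZ * pauliX = Complex.I • pauliY := by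
  ext i j
  fin_cases i <;> fin_cases j <;>
    simp [pauliX, pauliY, pauliZ, Matrix.mul_apply, Fin.sum_univ_two] <;> ring

lemma mulYZ : pauliY * pauliZ = Complex.I • pauliX := by
  ext i j
  fin_cases i <;> fin_cases j <;>
    simp [pauliX, pauliY, pauliZ, Matrix.mul_apply, Fin.sum_univ_two] <;> ring

lemma mulZY : pauliZ * pauliY = (-Complex.I) • pauliX := by
  ext i j
  fin_cases i <;> fin_cases j <;>
    simp [pauliX, pauliY, pauliZ, Matrix.mul_apply, Fin.sum_univ_two] <;> ring

/-- `uf` is the identity away from the support of the term. -/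
lemma uf_away {n : ℕ} {i s : Fin n} (t : Fin 4) (h1 : s ≠ i)
    (h2 : (s : ℕ) ≠ (i : ℕ) + 1) : uf n i t s = 1 := by
  unfold uf
  split
  · rw [Function.update_of_ne h1]
  · split
    · rw [Function.update_of_ne (by simp only [ne_eq, Fin.ext_iff]; exact h2),
        Function.update_of_ne h1]
    · rfl

lemma uf_self {n : ℕ} (i : Fin n) (t : Fin 4) (h : (i : ℕ) + 1 < n) :
    uf n i t i = Pp t := by
  have hne : i ≠ (⟨(i : ℕ) + 1, h⟩ : Fin n) := by
    simp only [ne_eq, Fin.ext_iff]; omega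
  fin_cases t <;> unfold uf <;>
  · first
    | (rw [if_neg (by decide), dif_pos h, Function.update_of_ne hne,
        Function.update_self])
    | (rw [if_pos (by decide), Function.update_self]; rfl)

lemma uf_succ {n : ℕ} (i : Fin n) (t : Fin 4) (h : (i : ℕ) + 1 < n) :
    uf n i t ⟨(i : ℕ) + 1, h⟩ = Qp t := by
  have hne : (⟨(i : ℕ) + 1, h⟩ : Fin n) ≠ i := by
    simp only [ne_eq, Fin.ext_iff]; omega
  fin_cases t <;> unfold uf <;>
  · first
    | (rw [if_neg (by decide), dif_pos h, Function.update_self]; rfl)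
    | (rw [if_pos (by decide), Function.update_of_ne hne]; rfl)

lemma cf_uf_owner {n : ℕ} (J : ℝ) (s : Fin n) (t : Fin 4) :
    cf n J s t = 0 ∨ (uf n s t s).trace = 0 := by
  by_cases h : (s : ℕ) + 1 < n
  · right
    rw [uf_self s t h]
    fin_cases t
    · exact traceX
    · exact traceY
    · exact traceZ
    · exact traceZ
  · by_cases ht : t = 3
    · right
      subst ht
      have : uf n s 3 s = pauliZ := by
        unfold uf
        rw [if_pos rfl, Function.update_self]
      rw [this, traceZ]
    · left
      unfold cf
      rw [if_neg h, if_neg ht]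

lemma expand (n : ℕ) (J : ℝ) (i j k : Fin n) :
    (g n J i * g n J j * g n J k).trace =
      ∑ t1 : Fin 4, ∑ t2 : Fin 4, ∑ t3 : Fin 4,
        cf n J i t1 * cf n J j t2 * cf n J k t3 *
          ∏ m, (uf n i t1 m * uf n j t2 m * uf n k t3 m).trace := by
  unfold g
  rw [Finset.sum_mul_sum, Finset.sum_mul, Matrix.trace_sum]
  refine Finset.sum_congr rfl fun t1 _ => ?_
  rw [Finset.sum_mul, Matrix.trace_sum]
  refine Finset.sum_congr rfl fun t2 _ => ?_
  rw [Finset.mul_sum, Matrix.trace_sum]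
  refine Finset.sum_congr rfl fun t3 _ => ?_
  simp only [smul_mul_assoc, mul_smul_comm, smul_smul, str_mul, Matrix.trace_smul,
    trace_str, smul_eq_mul]
  ring

lemma prod_trace_pair {n : ℕ} (i i1 : Fin n) (hne : i ≠ i1) (F : Fin n → M2)
    (hF : ∀ m, m ≠ i → m ≠ i1 → F m = 1) :
    ∏ m, (F m).trace = (F i).trace * (F i1).trace * 2 ^ (n - 2) := by
  have h2 : (1 : M2).trace = 2 := by
    simp [Matrix.trace_one]
  have hmem : i1 ∈ Finset.univ.erase i :=
    Finset.mem_erase.mpr ⟨hne.symm, Finset.mem_univ _⟩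
  rw [← Finset.mul_prod_erase Finset.univ _ (Finset.mem_univ i),
    ← Finset.mul_prod_erase _ _ hmem]
  have hrest : ∀ m ∈ (Finset.univ.erase i).erase i1, (F m).trace = 2 := by
    intro m hm
    simp only [Finset.mem_erase] at hm
    rw [hF m hm.2.1 hm.1, h2]
  rw [Finset.prod_congr rfl hrest, Finset.prod_const]
  have hcard : ((Finset.univ.erase i).erase i1).card = n - 2 := by
    rw [Finset.card_erase_of_mem hmem, Finset.card_erase_of_mem (Finset.mem_univ i)]
    simp; omega
  rw [hcard]; ring

lemma prod_trace_triple {n : ℕ} (i i1 i2 : Fin n) (h1 : i ≠ i1) (h2 : i ≠ i2)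
    (h3 : i1 ≠ i2) (F : Fin n → M2)
    (hF : ∀ m, m ≠ i → m ≠ i1 → m ≠ i2 → F m = 1) :
    ∏ m, (F m).trace = (F i).trace * (F i1).trace * (F i2).trace * 2 ^ (n - 3) := by
  have htr : (1 : M2).trace = 2 := by
    simp [Matrix.trace_one]
  have hmem1 : i1 ∈ Finset.univ.erase i :=
    Finset.mem_erase.mpr ⟨h1.symm, Finset.mem_univ _⟩
  have hmem2 : i2 ∈ (Finset.univ.erase i).erase i1 :=
    Finset.mem_erase.mpr ⟨h3.symm, Finset.mem_erase.mpr ⟨h2.symm, Finset.mem_univ _⟩⟩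
  rw [← Finset.mul_prod_erase Finset.univ _ (Finset.mem_univ i),
    ← Finset.mul_prod_erase _ _ hmem1, ← Finset.mul_prod_erase _ _ hmem2]
  have hrest : ∀ m ∈ ((Finset.univ.erase i).erase i1).erase i2, (F m).trace = 2 := by
    intro m hm
    simp only [Finset.mem_erase] at hm
    rw [hF m hm.2.2.1 hm.2.1 hm.1, htr]
  rw [Finset.prod_congr rfl hrest, Finset.prod_const]
  have hcard : (((Finset.univ.erase i).erase i1).erase i2).card = n - 3 := by
    rw [Finset.card_erase_of_mem hmem2, Finset.card_erase_of_mem hmem1,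
      Finset.card_erase_of_mem (Finset.mem_univ i)]
    simp; omega
  rw [hcard]; ring

lemma vanish_slot1 {n : ℕ} (J : ℝ) (i j k : Fin n) (hj1 : i ≠ j)
    (hj2 : (i : ℕ) ≠ (j : ℕ) + 1) (hk1 : i ≠ k) (hk2 : (i : ℕ) ≠ (k : ℕ) + 1) :
    (g n J i * g n J j * g n J k).trace = 0 := by
  rw [expand]
  refine Finset.sum_eq_zero fun t1 _ => Finset.sum_eq_zero fun t2 _ =>
    Finset.sum_eq_zero fun t3 _ => ?_
  rcases cf_uf_owner J i t1 with hc | hc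
  · rw [hc]; ring
  · rw [mul_eq_zero]; right
    refine Finset.prod_eq_zero (Finset.mem_univ i) ?_
    rw [uf_away t2 hj1 hj2, uf_away t3 hk1 hk2, mul_one, mul_one, hc]

lemma vanish_slot2 {n : ℕ} (J : ℝ) (i j k : Fin n) (hj1 : j ≠ i)
    (hj2 : (j : ℕ) ≠ (i : ℕ) + 1) (hk1 : j ≠ k) (hk2 : (j : ℕ) ≠ (k : ℕ) + 1) :
    (g n J i * g n J j * g n J k).trace = 0 := by
  rw [expand]
  refine Finset.sum_eq_zero fun t1 _ => Finset.sum_eq_zero fun t2 _ =>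
    Finset.sum_eq_zero fun t3 _ => ?_
  rcases cf_uf_owner J j t2 with hc | hc
  · rw [hc]; ring
  · rw [mul_eq_zero]; right
    refine Finset.prod_eq_zero (Finset.mem_univ j) ?_
    rw [uf_away t1 hj1 hj2, uf_away t3 hk1 hk2, one_mul, mul_one, hc]

lemma vanish_slot3 {n : ℕ} (J : ℝ) (i j k : Fin n) (hj1 : k ≠ i)
    (hj2 : (k : ℕ) ≠ (i : ℕ) + 1) (hk1 : k ≠ j) (hk2 : (k : ℕ) ≠ (j : ℕ) + 1) :
    (g n J i * g n J j * g n J k).trace = 0 := by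
  rw [expand]
  refine Finset.sum_eq_zero fun t1 _ => Finset.sum_eq_zero fun t2 _ =>
    Finset.sum_eq_zero fun t3 _ => ?_
  rcases cf_uf_owner J k t3 with hc | hc
  · rw [hc]; ring
  · rw [mul_eq_zero]; right
    refine Finset.prod_eq_zero (Finset.mem_univ k) ?_
    rw [uf_away t1 hj1 hj2, uf_away t2 hk1 hk2, one_mul, one_mul, hc]

lemma core1 {n : ℕ} (J : ℝ) (i : Fin n) (h : (i : ℕ) + 1 < n) :
    (g n J i * g n J i * g n J i).trace = -6 * (J : ℂ) * 2 ^ n := by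
  have hne : i ≠ (⟨(i : ℕ) + 1, h⟩ : Fin n) := by
    simp only [ne_eq, Fin.ext_iff]; omega
  rw [expand]
  have key : ∀ t1 t2 t3 : Fin 4,
      ∏ m, (uf n i t1 m * uf n i t2 m * uf n i t3 m).trace
        = (Pp t1 * Pp t2 * Pp t3).trace * (Qp t1 * Qp t2 * Qp t3).trace * 2 ^ (n - 2) := by
    intro t1 t2 t3
    rw [prod_trace_pair i ⟨(i : ℕ) + 1, h⟩ hne _ ?_]
    · rw [uf_self i t1 h, uf_self i t2 h, uf_self i t3 h, uf_succ i t1 h,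
        uf_succ i t2 h, uf_succ i t3 h]
    · intro m hm1 hm2
      have hm2' : (m : ℕ) ≠ (i : ℕ) + 1 := fun hc => hm2 (Fin.ext hc)
      rw [uf_away t1 hm1 hm2', uf_away t2 hm1 hm2', uf_away t3 hm1 hm2', one_mul,
        one_mul]
  simp only [key]
  have hc0 : cf n J i 0 = 1 := by unfold cf; rw [if_pos h, if_neg (by decide)]
  have hc1 : cf n J i 1 = 1 := by unfold cf; rw [if_pos h, if_neg (by decide)]
  have hc2 : cf n J i 2 = (J : ℂ) := by unfold cf; rw [if_pos h, if_pos (by decide)]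
  have hc3 : cf n J i 3 = (J : ℂ) := by unfold cf; rw [if_pos h, if_pos (by decide)]
  simp only [Fin.sum_univ_four, hc0, hc1, hc2, hc3, show Pp 0 = pauliX from rfl,
    show Pp 1 = pauliY from rfl, show Pp 2 = pauliZ from rfl,
    show Pp 3 = pauliZ from rfl, show Qp 0 = pauliX from rfl,
    show Qp 1 = pauliY from rfl, show Qp 2 = pauliZ from rfl,
    show Qp 3 = (1 : M2) from rfl]
  simp only [mulXX, mulYY, mulZZ, mulXY, mulYX, mulXZ, mulZX, mulYZ, mulZY,
    one_mul, mul_one, smul_mul_assoc, mul_smul_comm, smul_smul, Matrix.trace_smul,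
    traceX, traceY, traceZ, traceOne, smul_eq_mul, mul_zero, zero_mul, add_zero,
    zero_add, smul_zero, neg_mul, mul_neg, neg_neg, neg_zero]
  have h4 : (2 : ℂ) ^ n = 2 ^ (n - 2) * 4 := by
    obtain ⟨m, rfl⟩ : ∃ m, n = m + 2 := ⟨n - 2, by omega⟩
    rw [pow_add, Nat.add_sub_cancel]
    norm_num
  rw [h4]
  ring_nf
  simp only [Complex.I_sq]
  ring

lemma core1' {n : ℕ} (J : ℝ) (i : Fin n) (h : ¬ (i : ℕ) + 1 < n) :
    (g n J i * g n J i * g n J i).trace = 0 := by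
  rw [expand]
  have hcf : ∀ t : Fin 4, t ≠ 3 → cf n J i t = 0 := by
    intro t ht
    unfold cf
    rw [if_neg h, if_neg ht]
  have huf : uf n i 3 i = pauliZ := by
    unfold uf
    rw [if_pos rfl, Function.update_self]
  refine Finset.sum_eq_zero fun t1 _ => Finset.sum_eq_zero fun t2 _ =>
    Finset.sum_eq_zero fun t3 _ => ?_
  by_cases h1 : t1 = 3
  · by_cases h2 : t2 = 3
    · by_cases h3 : t3 = 3
      · subst h1; subst h2; subst h3
        rw [mul_eq_zero]; right
        refine Finset.prod_eq_zero (Finset.mem_univ i) ?_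
        rw [huf, mulZZ, one_mul, traceZ]
      · rw [hcf t3 h3]; ring
    · rw [hcf t2 h2]; ring
  · rw [hcf t1 h1]; ring

lemma core2 {n : ℕ} (J : ℝ) (a b : Fin n) (hb : (b : ℕ) = (a : ℕ) + 1) :
    (g n J a * g n J a * g n J b).trace = 2 * (J : ℂ) ^ 3 * 2 ^ n := by
  have ha : (a : ℕ) + 1 < n := hb ▸ b.isLt
  have hba : b = ⟨(a : ℕ) + 1, ha⟩ := Fin.ext hb
  subst hba
  have hval : ((⟨(a : ℕ) + 1, ha⟩ : Fin n) : ℕ) = (a : ℕ) + 1 := rfl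
  have hab : a ≠ (⟨(a : ℕ) + 1, ha⟩ : Fin n) := by
    simp only [ne_eq, Fin.ext_iff, hval]; omega
  have hab2 : (a : ℕ) ≠ ((⟨(a : ℕ) + 1, ha⟩ : Fin n) : ℕ) + 1 := by
    rw [hval]; omega
  have hc0 : cf n J a 0 = 1 := by unfold cf; rw [if_pos ha, if_neg (by decide)]
  have hc1 : cf n J a 1 = 1 := by unfold cf; rw [if_pos ha, if_neg (by decide)]
  have hc2 : cf n J a 2 = (J : ℂ) := by unfold cf; rw [if_pos ha, if_pos (by decide)]
  have hc3 : cf n J a 3 = (J : ℂ) := by unfold cf; rw [if_pos ha, if_pos (by decide)]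
  by_cases h2 : (a : ℕ) + 1 + 1 < n
  · -- generic case : the edge at b exists
    have hbc : ((⟨(a : ℕ) + 1, ha⟩ : Fin n) : ℕ) + 1 < n := h2
    have hvc : ((⟨((⟨(a : ℕ) + 1, ha⟩ : Fin n) : ℕ) + 1, hbc⟩ : Fin n) : ℕ)
        = (a : ℕ) + 1 + 1 := rfl
    have hd0 : cf n J ⟨(a : ℕ) + 1, ha⟩ 0 = 1 := by
      unfold cf; rw [if_pos hbc, if_neg (by decide)]
    have hd1 : cf n J ⟨(a : ℕ) + 1, ha⟩ 1 = 1 := by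
      unfold cf; rw [if_pos hbc, if_neg (by decide)]
    have hd2 : cf n J ⟨(a : ℕ) + 1, ha⟩ 2 = (J : ℂ) := by
      unfold cf; rw [if_pos hbc, if_pos (by decide)]
    have hd3 : cf n J ⟨(a : ℕ) + 1, ha⟩ 3 = (J : ℂ) := by
      unfold cf; rw [if_pos hbc, if_pos (by decide)]
    have hac : a ≠ (⟨((⟨(a : ℕ) + 1, ha⟩ : Fin n) : ℕ) + 1, hbc⟩ : Fin n) := by
      simp only [ne_eq, Fin.ext_iff, hvc]; omega
    have hac2 : (a : ℕ) ≠ ((⟨((⟨(a : ℕ) + 1, ha⟩ : Fin n) : ℕ) + 1, hbc⟩ : Fin n) : ℕ)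
        + 1 := by
      rw [hvc]; omega
    have hbc' : (⟨(a : ℕ) + 1, ha⟩ : Fin n)
        ≠ (⟨((⟨(a : ℕ) + 1, ha⟩ : Fin n) : ℕ) + 1, hbc⟩ : Fin n) := by
      simp only [ne_eq, Fin.ext_iff, hval, hvc]; omega
    rw [expand]
    have key : ∀ t1 t2 t3 : Fin 4,
        ∏ m, (uf n a t1 m * uf n a t2 m * uf n ⟨(a : ℕ) + 1, ha⟩ t3 m).trace
          = (Pp t1 * Pp t2).trace * (Qp t1 * Qp t2 * Pp t3).trace * (Qp t3).trace
            * 2 ^ (n - 3) := by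
      intro t1 t2 t3
      rw [prod_trace_triple a ⟨(a : ℕ) + 1, ha⟩
        ⟨((⟨(a : ℕ) + 1, ha⟩ : Fin n) : ℕ) + 1, hbc⟩ hab hac hbc' _ ?_]
      · rw [uf_self a t1 ha, uf_self a t2 ha, uf_away t3 hab hab2, mul_one,
          uf_succ a t1 ha, uf_succ a t2 ha, uf_self ⟨(a : ℕ) + 1, ha⟩ t3 hbc,
          uf_away t1 (Ne.symm hac) (by rw [hvc]; omega),
          uf_away t2 (Ne.symm hac) (by rw [hvc]; omega), one_mul, one_mul,
          uf_succ ⟨(a : ℕ) + 1, ha⟩ t3 hbc]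
      · intro m hm1 hm2 hm3
        have hm2' : (m : ℕ) ≠ (a : ℕ) + 1 := fun hc => hm2 (Fin.ext hc)
        have hm3' : (m : ℕ) ≠ ((⟨(a : ℕ) + 1, ha⟩ : Fin n) : ℕ) + 1 := fun hc =>
          hm3 (Fin.ext hc)
        rw [uf_away t1 hm1 hm2', uf_away t2 hm1 hm2', uf_away t3 hm2 hm3', one_mul,
          one_mul]
    simp only [key]
    simp only [Fin.sum_univ_four, hc0, hc1, hc2, hc3, hd0, hd1, hd2, hd3,
      show Pp 0 = pauliX from rfl, show Pp 1 = pauliY from rfl,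
      show Pp 2 = pauliZ from rfl, show Pp 3 = pauliZ from rfl,
      show Qp 0 = pauliX from rfl, show Qp 1 = pauliY from rfl,
      show Qp 2 = pauliZ from rfl, show Qp 3 = (1 : M2) from rfl]
    simp only [mulXX, mulYY, mulZZ, mulXY, mulYX, mulXZ, mulZX, mulYZ, mulZY,
      one_mul, mul_one, smul_mul_assoc, mul_smul_comm, smul_smul, Matrix.trace_smul,
      traceX, traceY, traceZ, traceOne, smul_eq_mul, mul_zero, zero_mul, add_zero,
      zero_add, smul_zero, neg_mul, mul_neg, neg_neg, neg_zero]
    have h8 : (2 : ℂ) ^ n = 2 ^ (n - 3) * 8 := by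
      obtain ⟨m, rfl⟩ : ∃ m, n = m + 3 := ⟨n - 3, by omega⟩
      rw [pow_add, Nat.add_sub_cancel]
      norm_num
    rw [h8]
    first
    | (ring_nf; done)
    | (ring_nf; simp only [Complex.I_sq]; ring)
  · -- boundary case : b is the last site
    have hd : ∀ t : Fin 4, t ≠ 3 → cf n J ⟨(a : ℕ) + 1, ha⟩ t = 0 := by
      intro t ht
      unfold cf
      rw [if_neg (by rw [hval]; omega), if_neg ht]
    have hd3 : cf n J ⟨(a : ℕ) + 1, ha⟩ 3 = (J : ℂ) := by
      unfold cf
      rw [if_neg (by rw [hval]; omega), if_pos rfl]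
    have hub : uf n ⟨(a : ℕ) + 1, ha⟩ 3 ⟨(a : ℕ) + 1, ha⟩ = pauliZ := by
      unfold uf
      rw [if_pos rfl, Function.update_self]
    rw [expand]
    have key : ∀ t1 t2 : Fin 4,
        ∏ m, (uf n a t1 m * uf n a t2 m * uf n ⟨(a : ℕ) + 1, ha⟩ 3 m).trace
          = (Pp t1 * Pp t2).trace * (Qp t1 * Qp t2 * pauliZ).trace * 2 ^ (n - 2) := by
      intro t1 t2
      rw [prod_trace_pair a ⟨(a : ℕ) + 1, ha⟩ hab _ ?_]
      · rw [uf_self a t1 ha, uf_self a t2 ha, uf_away 3 hab hab2, mul_one,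
          uf_succ a t1 ha, uf_succ a t2 ha, hub]
      · intro m hm1 hm2
        have hm2' : (m : ℕ) ≠ (a : ℕ) + 1 := fun hc => hm2 (Fin.ext hc)
        have hm2'' : (m : ℕ) ≠ ((⟨(a : ℕ) + 1, ha⟩ : Fin n) : ℕ) + 1 := by
          rw [hval]
          have := m.isLt
          omega
        rw [uf_away t1 hm1 hm2', uf_away t2 hm1 hm2', uf_away 3 hm2 hm2'', one_mul,
          one_mul]
    simp only [Fin.sum_univ_four, hc0, hc1, hc2, hc3, hd3, key,
      hd 0 (by decide), hd 1 (by decide), hd 2 (by decide),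
      show Pp 0 = pauliX from rfl, show Pp 1 = pauliY from rfl,
      show Pp 2 = pauliZ from rfl, show Pp 3 = pauliZ from rfl,
      show Qp 0 = pauliX from rfl, show Qp 1 = pauliY from rfl,
      show Qp 2 = pauliZ from rfl, show Qp 3 = (1 : M2) from rfl]
    simp only [mulXX, mulYY, mulZZ, mulXY, mulYX, mulXZ, mulZX, mulYZ, mulZY,
      one_mul, mul_one, smul_mul_assoc, mul_smul_comm, smul_smul, Matrix.trace_smul,
      traceX, traceY, traceZ, traceOne, smul_eq_mul, mul_zero, zero_mul, add_zero,
      zero_add, smul_zero, neg_mul, mul_neg, neg_neg, neg_zero]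
    have h4 : (2 : ℂ) ^ n = 2 ^ (n - 2) * 4 := by
      obtain ⟨m, rfl⟩ : ∃ m, n = m + 2 := ⟨n - 2, by omega⟩
      rw [pow_add, Nat.add_sub_cancel]
      norm_num
    rw [h4]
    first
    | (ring_nf; done)
    | (ring_nf; simp only [Complex.I_sq]; ring)

lemma Vlem {n : ℕ} (J : ℝ) (i j k : Fin n) :
    (g n J i * g n J j * g n J k).trace =
      (if i = j ∧ j = k ∧ (i : ℕ) + 1 < n then -6 * (J : ℂ) * 2 ^ n else 0)
      + (if j = i ∧ (k : ℕ) = (i : ℕ) + 1 then 2 * (J : ℂ) ^ 3 * 2 ^ n else 0)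
      + (if k = i ∧ (j : ℕ) = (i : ℕ) + 1 then 2 * (J : ℂ) ^ 3 * 2 ^ n else 0)
      + (if j = k ∧ (i : ℕ) = (j : ℕ) + 1 then 2 * (J : ℂ) ^ 3 * 2 ^ n else 0) := by
  by_cases hij : i = j
  · subst hij
    by_cases hjk : i = k
    · subst hjk
      by_cases hE : (i : ℕ) + 1 < n
      · rw [core1 J i hE]
        simp [hE]
      · rw [core1' J i hE]
        simp [hE]
    · by_cases hk : (k : ℕ) = (i : ℕ) + 1
      · rw [core2 J i k hk]
        simp [hjk, Ne.symm hjk, hk]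
      · rw [vanish_slot3 J i i k (fun hc => hjk hc.symm) hk (fun hc => hjk hc.symm)
          hk]
        simp [hjk, Ne.symm hjk, hk]
  · by_cases hjk : j = k
    · subst hjk
      by_cases hi : (i : ℕ) = (j : ℕ) + 1
      · rw [Matrix.trace_mul_cycle, Matrix.trace_mul_cycle, core2 J j i hi]
        simp [hij, Ne.symm hij, hi]
      · rw [vanish_slot1 J i j j hij hi hij hi]
        simp [hij, Ne.symm hij, hi]
    · by_cases hik : i = k
      · subst hik
        by_cases hj : (j : ℕ) = (i : ℕ) + 1
        · rw [Matrix.trace_mul_cycle, core2 J i j hj]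
          simp [hij, Ne.symm hij, hj, hjk, Ne.symm hjk]
        · rw [vanish_slot2 J i j i (fun hc => hij hc.symm) hj
            (fun hc => hij hc.symm) hj]
          simp [hij, Ne.symm hij, hj, hjk, Ne.symm hjk]
      · have hij' : (i : ℕ) ≠ (j : ℕ) := fun h => hij (Fin.ext h)
        have hjk' : (j : ℕ) ≠ (k : ℕ) := fun h => hjk (Fin.ext h)
        have hik' : (i : ℕ) ≠ (k : ℕ) := fun h => hik (Fin.ext h)
        have goal0 : (g n J i * g n J j * g n J k).trace = 0 := by
          rcases lt_or_gt_of_ne hij' with h1 | h1 <;>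
            rcases lt_or_gt_of_ne hjk' with h2 | h2 <;>
            rcases lt_or_gt_of_ne hik' with h3 | h3 <;>
            first
            | exact vanish_slot1 J i j k hij (by omega) hik (by omega)
            | exact vanish_slot2 J i j k (Ne.symm hij) (by omega) hjk (by omega)
            | exact vanish_slot3 J i j k (Ne.symm hik) (by omega) (Ne.symm hjk)
                (by omega)
            | omega
        rw [goal0]
        simp [hij, Ne.symm hij, Ne.symm hik, hjk]

lemma sum_coe_eq {n : ℕ} (m : ℕ) (C : ℂ) :
    ∑ k : Fin n, (if (k : ℕ) = m then C else 0) = if m < n then C else 0 := by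
  by_cases hm : m < n
  · rw [if_pos hm, Finset.sum_eq_single (⟨m, hm⟩ : Fin n)]
    · rw [if_pos rfl]
    · intro b _ hb
      rw [if_neg]
      intro hc
      exact hb (Fin.ext hc)
    · intro h
      exact absurd (Finset.mem_univ _) h
  · rw [if_neg hm]
    apply Finset.sum_eq_zero
    intro k _
    rw [if_neg]
    intro hc
    exact hm (hc ▸ k.isLt)

lemma count_edges {n : ℕ} (hn : 1 ≤ n) (C : ℂ) :
    ∑ i : Fin n, (if (i : ℕ) + 1 < n then C else 0) = ((n : ℂ) - 1) * C := by
  obtain ⟨m, rfl⟩ : ∃ m, n = m + 1 := ⟨n - 1, by omega⟩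
  have hiff : ∀ i : Fin (m + 1), ((i : ℕ) + 1 < m + 1) ↔ i ≠ Fin.last m := by
    intro i
    simp only [ne_eq, Fin.ext_iff, Fin.val_last]
    omega
  rw [Finset.sum_congr rfl (fun i _ => if_congr (hiff i) rfl rfl), ← Finset.sum_filter,
    Finset.filter_ne', Finset.sum_const, Finset.card_erase_of_mem (Finset.mem_univ _)]
  simp only [Finset.card_univ, Fintype.card_fin, Nat.add_sub_cancel, nsmul_eq_mul]
  push_cast
  ring

/-- `tr(O³_XXZ) = 6J(1-J²)(n-1)·d` with `d = 2ⁿ`; in particular it vanishes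
when `J = 1`. -/
theorem trace_cube_xxz (n : ℕ) (hn : 1 ≤ n) (J : ℝ) :
    Matrix.trace (xxzHamiltonian n J * xxzHamiltonian n J * xxzHamiltonian n J) =
      6 * (J : ℂ) * (1 - (J : ℂ) ^ 2) * ((n : ℂ) - 1) * 2 ^ n ∧
    (J = 1 →
      Matrix.trace (xxzHamiltonian n J * xxzHamiltonian n J * xxzHamiltonian n J) = 0) := by
  have main : Matrix.trace (xxzHamiltonian n J * xxzHamiltonian n J *
      xxzHamiltonian n J) = 6 * (J : ℂ) * (1 - (J : ℂ) ^ 2) * ((n : ℂ) - 1) * 2 ^ n := by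
    rw [H_eq, neg_mul_neg, mul_neg, Matrix.trace_neg]
    have expand3 : Matrix.trace ((∑ i, g n J i) * (∑ i, g n J i) * (∑ i, g n J i))
        = ∑ i, ∑ j, ∑ k, (g n J i * g n J j * g n J k).trace := by
      rw [Finset.sum_mul_sum, Finset.sum_mul, Matrix.trace_sum]
      refine Finset.sum_congr rfl fun i _ => ?_
      rw [Finset.sum_mul, Matrix.trace_sum]
      refine Finset.sum_congr rfl fun j _ => ?_
      rw [Finset.mul_sum, Matrix.trace_sum]
    rw [expand3]
    simp only [Vlem J, Finset.sum_add_distrib]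
    have e1 : (∑ i : Fin n, ∑ j : Fin n, ∑ k : Fin n,
        if i = j ∧ j = k ∧ (i : ℕ) + 1 < n then -6 * (J : ℂ) * 2 ^ n else 0)
        = ((n : ℂ) - 1) * (-6 * (J : ℂ) * 2 ^ n) := by
      have step1 : ∀ i j : Fin n, (∑ k : Fin n,
          if i = j ∧ j = k ∧ (i : ℕ) + 1 < n then -6 * (J : ℂ) * 2 ^ n else 0)
          = if i = j then (if (i : ℕ) + 1 < n then -6 * (J : ℂ) * 2 ^ n else 0)
            else 0 := by
        intro i j
        by_cases hij : i = j
        · subst hij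
          by_cases hE : (i : ℕ) + 1 < n
          · simp [hE, Finset.sum_ite_eq]
          · simp [hE]
        · simp [hij]
      have step2 : ∀ i : Fin n, (∑ j : Fin n,
          if i = j then (if (i : ℕ) + 1 < n then -6 * (J : ℂ) * 2 ^ n else 0)
            else 0)
          = if (i : ℕ) + 1 < n then -6 * (J : ℂ) * 2 ^ n else 0 := by
        intro i
        simp [Finset.sum_ite_eq]
      simp only [step1, step2]
      exact count_edges hn _
    have e2 : (∑ i : Fin n, ∑ j : Fin n, ∑ k : Fin n,
        if j = i ∧ (k : ℕ) = (i : ℕ) + 1 then 2 * (J : ℂ) ^ 3 * 2 ^ n else 0)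
        = ((n : ℂ) - 1) * (2 * (J : ℂ) ^ 3 * 2 ^ n) := by
      have step1 : ∀ i j : Fin n, (∑ k : Fin n,
          if j = i ∧ (k : ℕ) = (i : ℕ) + 1 then 2 * (J : ℂ) ^ 3 * 2 ^ n else 0)
          = if j = i then (if (i : ℕ) + 1 < n then 2 * (J : ℂ) ^ 3 * 2 ^ n else 0)
            else 0 := by
        intro i j
        by_cases hji : j = i
        · simp only [hji, true_and, if_true]
          exact sum_coe_eq _ _
        · simp [hji]
      have step2 : ∀ i : Fin n, (∑ j : Fin n,
          if j = i then (if (i : ℕ) + 1 < n then 2 * (J : ℂ) ^ 3 * 2 ^ n else 0)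
            else 0)
          = if (i : ℕ) + 1 < n then 2 * (J : ℂ) ^ 3 * 2 ^ n else 0 := by
        intro i
        simp [Finset.sum_ite_eq']
      simp only [step1, step2]
      exact count_edges hn _
    have e3 : (∑ i : Fin n, ∑ j : Fin n, ∑ k : Fin n,
        if k = i ∧ (j : ℕ) = (i : ℕ) + 1 then 2 * (J : ℂ) ^ 3 * 2 ^ n else 0)
        = ((n : ℂ) - 1) * (2 * (J : ℂ) ^ 3 * 2 ^ n) := by
      have step1 : ∀ i j : Fin n, (∑ k : Fin n,
          if k = i ∧ (j : ℕ) = (i : ℕ) + 1 then 2 * (J : ℂ) ^ 3 * 2 ^ n else 0)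
          = if (j : ℕ) = (i : ℕ) + 1 then 2 * (J : ℂ) ^ 3 * 2 ^ n else 0 := by
        intro i j
        by_cases hji : (j : ℕ) = (i : ℕ) + 1
        · simp [hji, Finset.sum_ite_eq']
        · simp [hji]
      simp only [step1, sum_coe_eq]
      exact count_edges hn _
    have e4 : (∑ i : Fin n, ∑ j : Fin n, ∑ k : Fin n,
        if j = k ∧ (i : ℕ) = (j : ℕ) + 1 then 2 * (J : ℂ) ^ 3 * 2 ^ n else 0)
        = ((n : ℂ) - 1) * (2 * (J : ℂ) ^ 3 * 2 ^ n) := by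
      have step1 : ∀ i j : Fin n, (∑ k : Fin n,
          if j = k ∧ (i : ℕ) = (j : ℕ) + 1 then 2 * (J : ℂ) ^ 3 * 2 ^ n else 0)
          = if (i : ℕ) = (j : ℕ) + 1 then 2 * (J : ℂ) ^ 3 * 2 ^ n else 0 := by
        intro i j
        by_cases hij4 : (i : ℕ) = (j : ℕ) + 1
        · simp [hij4, Finset.sum_ite_eq]
        · simp [hij4]
      simp only [step1]
      rw [Finset.sum_comm]
      simp only [sum_coe_eq]
      exact count_edges hn _
    rw [e1, e2, e3, e4]
    ring
  refine ⟨main, fun hJ => ?_⟩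
  rw [main, hJ]
  norm_num
end
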